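/- Let G = (V, E) be a directed graph on n vertices with latin matrix L and latin powers L^[k]. For each i, the words of L^[n]_{ii} other than λ are exactly the vertex sequences of the Hamiltonian circuits of G starting at v_i (elementary circuits of length n, which visit every vertex of G exactly once before returning to v_i); in particular, G has a Hamiltonian circuit starting at v_i if and only if L^[n]_{ii} ≠ {λ}. -/

import Mathlib

attribute [local instance] Classical.propDecidable

/-- A simple word over an alphabet: a nonempty word with pairwise distinct letters. -/
def IsSimpleWord {α : Type*} (w : List α) : Prop := w ≠ [] ∧ w.Nodup

/-- A simple cyclic word: a word of the form `a₁…a_k a₁` with `a₁…a_k` a simple word. -/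
def IsCyclicWord {α : Type*} (w : List α) : Prop :=
  ∃ (a : α) (l : List α), (a :: l).Nodup ∧ w = (a :: l) ++ [a]

/-- `Σ_dw*`: the set of distinguished words over `α`, together with the empty word `λ = []`. -/
def DW (α : Type*) : Set (List α) :=
  {w | w = [] ∨ IsSimpleWord w ∨ IsCyclicWord w}

/-- The latin composition of (distinguished) words.  If either word is `λ` or a simple
cyclic word the result is `λ`; for simple words `x = a₁…a_k`, `y = b₁…b_r`:
`x ∘ℓ y = a₁…a_k b₂…b_r` if `a_k = b₁` and `{a₁,…,a_k} ∩ {b₂,…,b_r} = ∅`;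
`x ∘ℓ y = a₁…a_k b₂…b_{r-1} a₁` if `a_k = b₁`, `b_r = a₁` and
`{a₁,…,a_k} ∩ {b₂,…,b_{r-1}} = ∅`; and `x ∘ℓ y = λ` otherwise. -/
noncomputable def latin {α : Type*} (x y : List α) : List α :=
  if IsSimpleWord x ∧ IsSimpleWord y then
    if x.getLast? = y.head? ∧ ∀ a ∈ x, a ∉ y.tail then
      x ++ y.tail
    else if x.getLast? = y.head? ∧ y.getLast? = x.head? ∧ ∀ a ∈ x, a ∉ y.tail.dropLast then
      x ++ y.tail.dropLast ++ x.head?.toList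
    else []
  else []

/-- A distinguished language over `α`: a set of distinguished words containing `λ`. -/
def IsDLang {α : Type*} (L : Set (List α)) : Prop := L ⊆ DW α ∧ [] ∈ L

/-- The latin composition of languages: `L₁ ∘ℓ L₂ = {x ∘ℓ y : x ∈ L₁, y ∈ L₂}`. -/
def latinLang {α : Type*} (L₁ L₂ : Set (List α)) : Set (List α) :=
  {w | ∃ x ∈ L₁, ∃ y ∈ L₂, w = latin x y}

/-- The latin matrix of the directed graph `G = (Fin n, E)`: entry `(i,j)` is the
distinguished language `{λ, v_i v_j}` if `(v_i, v_j) ∈ E`, and `{λ}` otherwise. -/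
noncomputable def latinMat {n : ℕ} (E : Set (Fin n × Fin n)) :
    Fin n → Fin n → Set (List (Fin n)) :=
  fun i j => if (i, j) ∈ E then {[], [i, j]} else {[]}

/-- Matrix product over the semiring of distinguished languages:
`(M ∘ℓ N)_{ij} = ⋃_m M_{im} ∘ℓ N_{mj}`. -/
def latinMatMul {n : ℕ} (M N : Fin n → Fin n → Set (List (Fin n))) :
    Fin n → Fin n → Set (List (Fin n)) :=
  fun i j => ⋃ m : Fin n, latinLang (M i m) (N m j)

/-- Latin powers of a matrix: `L^[1] = L` and `L^[k] = L ∘ℓ L^[k-1]` for `k ≥ 2`. -/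
noncomputable def latinPow {n : ℕ} (M : Fin n → Fin n → Set (List (Fin n))) :
    ℕ → Fin n → Fin n → Set (List (Fin n))
  | 0 => fun _ _ => {[]}
  | 1 => M
  | k + 2 => latinMatMul M (latinPow M (k + 1))

/-! Latin composition of an arc word `i m` with a simple word `y` starting at `m` is `i :: y` when
`i` does not occur in `y` before its last letter, and `λ` otherwise. By induction on `k`, the
nonempty words of `L^[k]_{ij}` are therefore exactly the elementary walks of length `k` from `i`
to `j`. For `k = n` and `j = i` the first `n` letters of such a walk are `n` distinct vertices,
i.e. all of them, which is a Hamiltonian circuit. As `λ` lies in every entry of `L^[n]`,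
`L^[n]_{ii} ≠ {λ}` exactly when it contains a nonempty word. -/

theorem List.Nodup.count_eq_one_of_length_eq_card {α : Type*} [Fintype α] [DecidableEq α]
    {l : List α} (hl : l.Nodup) (hlen : l.length = Fintype.card α) (a : α) : l.count a = 1 := by
  have huniv : l.toFinset = Finset.univ :=
    Finset.eq_univ_of_card _ (by rw [List.toFinset_card_of_nodup hl, hlen])
  exact List.count_eq_one_of_mem hl (List.mem_toFinset.mp (huniv ▸ Finset.mem_univ a))

theorem List.nodup_tail_of_nodup_dropLast {α : Type*} {l : List α}
    (hl : l.head? = l.getLast?) (hnd : l.dropLast.Nodup) : l.tail.Nodup := by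
  rcases l.eq_nil_or_concat with rfl | ⟨l', b, rfl⟩
  · exact List.nodup_nil
  rcases l' with _ | ⟨a, l'⟩
  · exact List.nodup_nil
  simp only [List.concat_eq_append, List.getLast?_concat, List.dropLast_concat] at hl hnd ⊢
  obtain rfl : a = b := by simpa using hl
  rw [List.nodup_cons] at hnd
  exact hnd.2.append (List.nodup_singleton a) (by simpa using fun h => hnd.1 h)

theorem latin_eq_nil_of_not_isSimpleWord {α : Type*} {x y : List α}
    (h : ¬ (IsSimpleWord x ∧ IsSimpleWord y)) : latin x y = [] :=
  if_neg h

theorem latin_pair_of_nodup {α : Type*} {i m : α} {y : List α} (hy : y.Nodup)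
    (hm : y.head? = some m) (hlen : 2 ≤ y.length) :
    latin [i, m] y = if i ∈ y.dropLast then [] else i :: y := by
  obtain ⟨t, l, rfl⟩ : ∃ t l, y = (m :: t) ++ [l] := by
    rcases y with _ | ⟨m', t⟩
    · simp at hlen
    obtain rfl : m' = m := by simpa using hm
    rcases t.eq_nil_or_concat with rfl | ⟨t, l, rfl⟩
    · simp at hlen
    exact ⟨t, l, by simp⟩
  unfold latin IsSimpleWord
  simp only [List.getLast?_concat, List.dropLast_concat]
  simp only [List.cons_append, List.nodup_cons, List.mem_append,
    List.mem_cons, List.not_mem_nil, or_false, not_or] at hy ⊢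
  by_cases him : i = m
  · subst him; simp
  by_cases hit : i ∈ t
  · simp [him, hit, hy]
  by_cases hil : i = l
  -- the arc `(i, m)` closes `y` into a cycle: second branch of `latin`
  · subst hil; simp [him, hit, hy]
  · simp [him, hit, hil, hy]

section ElementaryWalk

variable {α : Type*} (E : Set (α × α))

/-- The vertex sequence of an elementary walk of length `k` from `i` to `j` along the arcs `E`:
a path if `i ≠ j`, a cycle through `i` if `i = j`. -/
def IsElementaryWalk (k : ℕ) (i j : α) (w : List α) : Prop :=
  w.length = k + 1 ∧ w.head? = some i ∧ w.getLast? = some j ∧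
    w.IsChain (fun a b => (a, b) ∈ E) ∧ w.dropLast.Nodup ∧ w.tail.Nodup

theorem isElementaryWalk_succ_iff {k : ℕ} {i j : α} {w : List α} :
    IsElementaryWalk E (k + 1) i j w ↔ ∃ m y, w = i :: y ∧ (i, m) ∈ E ∧
      IsElementaryWalk E k m j y ∧ y.Nodup ∧ i ∉ y.dropLast := by
  constructor
  · rintro ⟨hlen, hhead, hlast, hchain, hdrop, htail⟩
    obtain ⟨m, t, rfl⟩ : ∃ m t, w = i :: m :: t := by
      rcases w with _ | ⟨i', _ | ⟨m, t⟩⟩ <;> simp_all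
    rw [List.dropLast_cons_of_ne_nil (List.cons_ne_nil m t), List.nodup_cons] at hdrop
    rw [List.tail_cons] at htail
    rw [List.isChain_cons_cons] at hchain
    refine ⟨m, m :: t, rfl, hchain.1, ⟨by simpa using hlen, rfl, by simpa using hlast, hchain.2,
      htail.sublist (List.dropLast_sublist _), htail.sublist (List.tail_sublist _)⟩, htail, hdrop.1⟩
  · rintro ⟨m, y, rfl, hE, ⟨hlen, hhead, hlast, hchain, -, -⟩, hy, hiy⟩
    obtain ⟨t, rfl⟩ : ∃ t, y = m :: t := by
      rcases y with _ | ⟨m', t⟩ <;> simp_all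
    refine ⟨by simpa using hlen, rfl, by simpa using hlast,
      List.isChain_cons_cons.mpr ⟨hE, hchain⟩, ?_, hy⟩
    rw [List.dropLast_cons_of_ne_nil (List.cons_ne_nil m t)]
    exact List.nodup_cons.mpr ⟨hiy, hy.sublist (List.dropLast_sublist _)⟩

theorem isElementaryWalk_card_self_iff [Fintype α] [DecidableEq α] {i : α} {w : List α} :
    IsElementaryWalk E (Fintype.card α) i i w ↔
      w.length = Fintype.card α + 1 ∧ w.head? = some i ∧ w.getLast? = some i ∧
        (∀ v, w.dropLast.count v = 1) ∧ w.IsChain (fun a b => (a, b) ∈ E) := by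
  constructor
  · rintro ⟨hlen, hhead, hlast, hchain, hdrop, -⟩
    exact ⟨hlen, hhead, hlast, hdrop.count_eq_one_of_length_eq_card (by simp [hlen]), hchain⟩
  · rintro ⟨hlen, hhead, hlast, hcount, hchain⟩
    have hdrop : w.dropLast.Nodup := List.nodup_iff_count_le_one.mpr fun v => (hcount v).le
    exact ⟨hlen, hhead, hlast, hchain, hdrop,
      List.nodup_tail_of_nodup_dropLast (hhead.trans hlast.symm) hdrop⟩

end ElementaryWalk

theorem nil_mem_latinPow {n : ℕ} {M : Fin n → Fin n → Set (List (Fin n))}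
    (hM : ∀ i j, [] ∈ M i j) : ∀ k i j, [] ∈ latinPow M k i j
  | 0, _, _ => rfl
  | 1, i, j => hM i j
  | k + 2, i, j => Set.mem_iUnion.mpr ⟨i, [], hM i i, [], nil_mem_latinPow hM (k + 1) i j,
      (latin_eq_nil_of_not_isSimpleWord fun h => h.1.1 rfl).symm⟩

section LatinMatrix

variable {n : ℕ} (E : Set (Fin n × Fin n))

theorem mem_latinMat {i j : Fin n} {w : List (Fin n)} :
    w ∈ latinMat E i j ↔ w = [] ∨ (w = [i, j] ∧ (i, j) ∈ E) := by
  unfold latinMat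
  split_ifs with h <;> simp [h]

theorem mem_latinPow_add_two_of_ne_nil {k : ℕ} {i j : Fin n} {w : List (Fin n)} (hw : w ≠ []) :
    w ∈ latinPow (latinMat E) (k + 2) i j ↔ ∃ m y, (i, m) ∈ E ∧
      (y ∈ latinPow (latinMat E) (k + 1) m j ∧ y ≠ []) ∧ y.Nodup ∧ w = latin [i, m] y := by
  change w ∈ ⋃ m, latinLang (latinMat E i m) (latinPow (latinMat E) (k + 1) m j) ↔ _
  simp only [Set.mem_iUnion, latinLang, Set.mem_ofPred_eq, mem_latinMat]
  constructor
  · rintro ⟨m, x, rfl | ⟨rfl, hE⟩, y, hy, rfl⟩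
    · exact absurd (latin_eq_nil_of_not_isSimpleWord fun h => h.1.1 rfl) hw
    · by_cases hsimple : IsSimpleWord y
      · exact ⟨m, y, hE, ⟨hy, hsimple.1⟩, hsimple.2, rfl⟩
      · exact absurd (latin_eq_nil_of_not_isSimpleWord fun h => hsimple h.2) hw
  · rintro ⟨m, y, hE, ⟨hy, -⟩, -, rfl⟩
    exact ⟨m, [i, m], .inr ⟨rfl, hE⟩, y, hy, rfl⟩

theorem mem_latinPow_add_one_iff {k : ℕ} {i j : Fin n} {w : List (Fin n)} :
    w ∈ latinPow (latinMat E) (k + 1) i j ∧ w ≠ [] ↔ IsElementaryWalk E (k + 1) i j w := by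
  induction k generalizing i j w with
  | zero =>
    change w ∈ latinMat E i j ∧ w ≠ [] ↔ _
    rw [mem_latinMat]
    constructor
    · rintro ⟨rfl | ⟨rfl, hE⟩, hw⟩
      · exact absurd rfl hw
      · exact ⟨rfl, rfl, rfl, List.isChain_pair.mpr hE, by simp, by simp⟩
    · rintro ⟨hlen, hhead, hlast, hchain, -, -⟩
      obtain ⟨a, b, rfl⟩ := List.length_eq_two.mp hlen
      obtain ⟨rfl, rfl⟩ : a = i ∧ b = j := by simp_all
      exact ⟨.inr ⟨rfl, List.isChain_pair.mp hchain⟩, List.cons_ne_nil _ _⟩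
  | succ k ih =>
    rw [isElementaryWalk_succ_iff]
    constructor
    · rintro ⟨hw, hne⟩
      obtain ⟨m, y, hE, hy, hnd, rfl⟩ := (mem_latinPow_add_two_of_ne_nil E hne).mp hw
      have hwalk := ih.mp hy
      rw [latin_pair_of_nodup hnd hwalk.2.1 (by rw [hwalk.1]; omega)] at hne ⊢
      split_ifs at hne ⊢ with hiy
      · exact absurd rfl hne
      · exact ⟨m, y, rfl, hE, hwalk, hnd, hiy⟩
    · rintro ⟨m, y, rfl, hE, hwalk, hnd, hiy⟩
      have hlatin : latin [i, m] y = i :: y := by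
        rw [latin_pair_of_nodup hnd hwalk.2.1 (by rw [hwalk.1]; omega), if_neg hiy]
      exact ⟨(mem_latinPow_add_two_of_ne_nil E (List.cons_ne_nil _ _)).mpr
        ⟨m, y, hE, ih.mpr hwalk, hnd, hlatin.symm⟩, List.cons_ne_nil _ _⟩

end LatinMatrix

theorem latinPow_hamiltonian_circuits_general (n : ℕ) (E : Set (Fin n × Fin n))
    (i : Fin n) :
    (∀ w : List (Fin n),
      (w ∈ latinPow (latinMat E) n i i ∧ w ≠ []) ↔
        (w.length = n + 1 ∧ w.head? = some i ∧ w.getLast? = some i ∧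
          (∀ v : Fin n, w.dropLast.count v = 1) ∧
          w.Chain' (fun a b => (a, b) ∈ E))) ∧
    ((∃ w : List (Fin n),
        w.length = n + 1 ∧ w.head? = some i ∧ w.getLast? = some i ∧
          (∀ v : Fin n, w.dropLast.count v = 1) ∧
          w.Chain' (fun a b => (a, b) ∈ E)) ↔
      latinPow (latinMat E) n i i ≠ {([] : List (Fin n))}) := by
  obtain ⟨k, rfl⟩ := Nat.exists_eq_add_one_of_ne_zero i.pos.ne'
  have hcircuit : ∀ w : List (Fin (k + 1)),
      (w ∈ latinPow (latinMat E) (k + 1) i i ∧ w ≠ []) ↔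
        (w.length = k + 1 + 1 ∧ w.head? = some i ∧ w.getLast? = some i ∧
          (∀ v, w.dropLast.count v = 1) ∧ w.IsChain (fun a b => (a, b) ∈ E)) := by
    intro w
    rw [mem_latinPow_add_one_iff]
    simpa only [Fintype.card_fin] using isElementaryWalk_card_self_iff E (i := i) (w := w)
  have hnil : [] ∈ latinPow (latinMat E) (k + 1) i i :=
    nil_mem_latinPow (fun _ _ => (mem_latinMat E).mpr (.inl rfl)) _ _ _
  refine ⟨hcircuit, (exists_congr fun w => (hcircuit w).symm).trans ?_⟩
  simp only [Ne, Set.eq_singleton_iff_unique_mem, hnil, true_and,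
    not_forall, exists_prop]

/-- for each `i`, the words of `L^[n]_{ii}` other than `λ` are exactly the
vertex sequences of the Hamiltonian circuits of `G` starting at `v_i`: sequences
`(w₀, …, w_n)` with `w₀ = w_n = v_i`, whose first `n` vertices `w₀, …, w_{n-1}` list
each vertex of `G` exactly once, and which follow arcs of `G`; in particular `G` has a
Hamiltonian circuit starting at `v_i` iff `L^[n]_{ii} ≠ {λ}`. -/
theorem latinPow_hamiltonian_circuits (n : ℕ) (hn : 1 ≤ n) (E : Set (Fin n × Fin n))
    (i : Fin n) :
    (∀ w : List (Fin n),
      (w ∈ latinPow (latinMat E) n i i ∧ w ≠ []) ↔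
        (w.length = n + 1 ∧ w.head? = some i ∧ w.getLast? = some i ∧
          (∀ v : Fin n, w.dropLast.count v = 1) ∧
          w.Chain' (fun a b => (a, b) ∈ E))) ∧
    ((∃ w : List (Fin n),
        w.length = n + 1 ∧ w.head? = some i ∧ w.getLast? = some i ∧
          (∀ v : Fin n, w.dropLast.count v = 1) ∧
          w.Chain' (fun a b => (a, b) ∈ E)) ↔
      latinPow (latinMat E) n i i ≠ {([] : List (Fin n))}) :=
  latinPow_hamiltonian_circuits_general n E i
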